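/- Counting theorem for QK: if V = (v_i)_{i=1}^N is an orthonormal family in C^{2^s}, and for each i there exist a string σ_i in the domain of the prefix-free universal machine U and a finite orthonormal set A_i ⊆ C^{2^s} with U(σ_i) = A_i, ⟨v_i| F_i |v_i⟩ > ε where F_i = ∑_{t∈A_i} |t⟩⟨t|, and |σ_i| + log₂|A_i| ≤ B, then N ≤ ε^{-1}·2^B. -/

import Mathlib

/-!
Give index `i` the weight `∑_{t ∈ A_i} |⟨t, v_i⟩|² > ε` and group the indices by their
program `σ_i`. All indices in one group share the same orthonormal set `A`, so Bessel's
inequality for the orthonormal family `v`, applied to each `t ∈ A`, bounds the group's total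
weight by `|A| ≤ 2^(B - |σ|)`. Summing over the distinct programs, which form a prefix-free
code, Kraft's inequality `∑ 2^(-|σ|) ≤ 1` gives `N ε ≤ 2^B`.
-/

/-- A partial function on binary strings is prefix-free if no two distinct strings in its
domain are comparable under the prefix relation. -/
def PrefixFree {X : Type*} (U : List Bool → Option X) : Prop :=
  ∀ x y : List Bool, (U x).isSome → (U y).isSome → x <+: y → x = y

open Finset

def binaryWords (n : ℕ) : Finset (List Bool) :=
  univ.image (List.Vector.toList : List.Vector Bool n → List Bool)

lemma card_binaryWords (n : ℕ) : #(binaryWords n) = 2 ^ n := by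
  simp [binaryWords, card_image_of_injective _ List.Vector.toList_injective, card_vector]

lemma mem_binaryWords {n : ℕ} {l : List Bool} : l ∈ binaryWords n ↔ l.length = n := by
  constructor
  · intro h
    obtain ⟨w, -, rfl⟩ := mem_image.mp h
    exact w.toList_length
  · intro h
    exact mem_image.mpr ⟨⟨l, h⟩, mem_univ _, rfl⟩

def binaryExtensions (τ : List Bool) (L : ℕ) : Finset (List Bool) :=
  (binaryWords (L - τ.length)).image (τ ++ ·)

lemma card_binaryExtensions (τ : List Bool) (L : ℕ) :
    #(binaryExtensions τ L) = 2 ^ (L - τ.length) := by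
  rw [binaryExtensions, card_image_of_injective _ (List.append_right_injective τ),
    card_binaryWords]

lemma prefix_of_mem_binaryExtensions {τ l : List Bool} {L : ℕ}
    (h : l ∈ binaryExtensions τ L) : τ <+: l := by
  obtain ⟨r, -, rfl⟩ := mem_image.mp h
  exact List.prefix_append τ r

lemma binaryExtensions_subset_binaryWords {τ : List Bool} {L : ℕ} (hτ : τ.length ≤ L) :
    binaryExtensions τ L ⊆ binaryWords L := by
  intro l hl
  obtain ⟨r, hr, rfl⟩ := mem_image.mp hl
  rw [mem_binaryWords] at hr ⊢
  rw [List.length_append, hr]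
  omega

lemma sum_two_pow_sub_length_le_two_pow {S : Finset (List Bool)}
    (hS : (S : Set (List Bool)).Pairwise fun x y => ¬x <+: y) {L : ℕ}
    (hL : ∀ τ ∈ S, τ.length ≤ L) :
    ∑ τ ∈ S, 2 ^ (L - τ.length) ≤ 2 ^ L := by
  classical
  have hdisj : (S : Set (List Bool)).PairwiseDisjoint (binaryExtensions · L) := by
    intro x hx y hy hxy
    refine disjoint_left.mpr fun l hlx hly => ?_
    have hxl := prefix_of_mem_binaryExtensions hlx
    have hyl := prefix_of_mem_binaryExtensions hly
    rcases le_total x.length y.length with h | h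
    · exact hS hx hy hxy (List.prefix_of_prefix_length_le hxl hyl h)
    · exact hS hy hx hxy.symm (List.prefix_of_prefix_length_le hyl hxl h)
  calc ∑ τ ∈ S, 2 ^ (L - τ.length) = #(S.biUnion (binaryExtensions · L)) := by
        rw [card_biUnion hdisj]
        exact sum_congr rfl fun τ _ => (card_binaryExtensions τ L).symm
    _ ≤ #(binaryWords L) :=
        card_le_card <| biUnion_subset.mpr fun τ hτ =>
          binaryExtensions_subset_binaryWords (hL τ hτ)
    _ = 2 ^ L := card_binaryWords L

/-- Kraft's inequality. -/
theorem sum_inv_two_pow_length_le_one {S : Finset (List Bool)}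
    (hS : (S : Set (List Bool)).Pairwise fun x y => ¬x <+: y) :
    ∑ τ ∈ S, ((2 : ℝ) ^ τ.length)⁻¹ ≤ 1 := by
  set L := S.sup List.length
  have hL : ∀ τ ∈ S, τ.length ≤ L := fun τ hτ => le_sup hτ
  have hnat : ∑ τ ∈ S, (2 : ℝ) ^ (L - τ.length) ≤ 2 ^ L := by
    exact_mod_cast sum_two_pow_sub_length_le_two_pow hS hL
  have hterm : ∀ τ ∈ S, ((2 : ℝ) ^ τ.length)⁻¹ = 2 ^ (L - τ.length) / 2 ^ L := by
    intro τ hτ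
    rw [eq_div_iff (by positivity), ← div_eq_inv_mul, div_eq_mul_inv,
      ← pow_sub₀ (2 : ℝ) two_ne_zero (hL τ hτ)]
  rw [sum_congr rfl hterm, ← sum_div, div_le_one (by positivity)]
  exact hnat

lemma natCast_le_two_rpow_mul_inv_of_add_logb_le {n ℓ : ℕ} {B : ℝ}
    (h : ℓ + Real.logb 2 n ≤ B) : (n : ℝ) ≤ 2 ^ B * ((2 : ℝ) ^ ℓ)⁻¹ := by
  rcases n.eq_zero_or_pos with rfl | hn
  · rw [Nat.cast_zero]
    positivity
  · rw [← Real.rpow_natCast, ← Real.rpow_neg zero_le_two, ← Real.rpow_add two_pos,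
      ← Real.logb_le_iff_le_rpow one_lt_two (by exact_mod_cast hn)]
    linarith

section InnerProductSpace

variable {𝕜 E ι : Type*} [RCLike 𝕜] [NormedAddCommGroup E] [InnerProductSpace 𝕜 E]

theorem Orthonormal.sum_sum_norm_inner_sq_le_card {v : ι → E} (hv : Orthonormal 𝕜 v)
    (s : Finset ι) {A : Finset E} (hA : Orthonormal 𝕜 fun t : (A : Set E) => (t : E)) :
    ∑ i ∈ s, ∑ t ∈ A, ‖inner 𝕜 t (v i)‖ ^ 2 ≤ #A := by
  rw [sum_comm, card_eq_sum_ones, Nat.cast_sum, Nat.cast_one]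
  refine sum_le_sum fun t ht => ?_
  calc ∑ i ∈ s, ‖inner 𝕜 t (v i)‖ ^ 2 = ∑ i ∈ s, ‖inner 𝕜 (v i) t‖ ^ 2 := by
        simp only [norm_inner_symm]
    _ ≤ ‖t‖ ^ 2 := hv.sum_inner_products_le t
    _ = 1 := by rw [hA.1 ⟨t, ht⟩, one_pow]

theorem card_mul_le_two_rpow_of_prefixFree [Fintype ι] {v : ι → E} (hv : Orthonormal 𝕜 v)
    {σ : ι → List Bool} (hσ : (Set.range σ).Pairwise fun x y => ¬x <+: y)
    {code : List Bool → Finset E}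
    (hcode : ∀ i, Orthonormal 𝕜 fun t : (code (σ i) : Set E) => (t : E))
    {ε B : ℝ} (hε : ∀ i, ε < ∑ t ∈ code (σ i), ‖inner 𝕜 t (v i)‖ ^ 2)
    (hB : ∀ i, (σ i).length + Real.logb 2 #(code (σ i)) ≤ B) :
    Fintype.card ι * ε ≤ 2 ^ B := by
  classical
  set weight : ι → ℝ := fun i => ∑ t ∈ code (σ i), ‖inner 𝕜 t (v i)‖ ^ 2
  have hfiber : ∀ τ ∈ univ.image σ,
      ∑ i with σ i = τ, weight i ≤ 2 ^ B * ((2 : ℝ) ^ τ.length)⁻¹ := by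
    intro τ hτ
    obtain ⟨i₀, -, rfl⟩ := mem_image.mp hτ
    calc ∑ i with σ i = σ i₀, weight i
        = ∑ i with σ i = σ i₀, ∑ t ∈ code (σ i₀), ‖inner 𝕜 t (v i)‖ ^ 2 :=
          sum_congr rfl fun i hi => by rw [← (mem_filter.mp hi).2]
      _ ≤ #(code (σ i₀)) := hv.sum_sum_norm_inner_sq_le_card _ (hcode i₀)
      _ ≤ 2 ^ B * ((2 : ℝ) ^ (σ i₀).length)⁻¹ :=
          natCast_le_two_rpow_mul_inv_of_add_logb_le (hB i₀)
  have hkraft : ∑ τ ∈ univ.image σ, ((2 : ℝ) ^ τ.length)⁻¹ ≤ 1 :=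
    sum_inv_two_pow_length_le_one (by rwa [coe_image, coe_univ, Set.image_univ])
  calc Fintype.card ι * ε = ∑ _i : ι, ε := by rw [sum_const, nsmul_eq_mul, card_univ]
    _ ≤ ∑ i, weight i := sum_le_sum fun i _ => (hε i).le
    _ = ∑ τ ∈ univ.image σ, ∑ i with σ i = τ, weight i :=
        (sum_fiberwise_of_maps_to (fun i _ => mem_image_of_mem σ (mem_univ i)) _).symm
    _ ≤ ∑ τ ∈ univ.image σ, 2 ^ B * ((2 : ℝ) ^ τ.length)⁻¹ := sum_le_sum hfiber
    _ ≤ 2 ^ B := by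
        rw [← mul_sum]
        exact mul_le_of_le_one_right (by positivity) hkraft

end InnerProductSpace

/-- **counting theorem for QK.**  Let `(v_i)_{i=1}^N` be an orthonormal family
in `ℂ^{2^s}`.  Suppose for each `i` there are a string `σ_i` in the domain of the prefix-free
machine `U` and a finite orthonormal set `A_i` with `U(σ_i) = A_i`,
`⟨v_i| F_i |v_i⟩ = ∑_{t ∈ A_i} |⟨t, v_i⟩|² > ε`, and `|σ_i| + log₂|A_i| ≤ B`.
Then `N ≤ ε⁻¹·2^B`. -/
theorem stmt3 (s N : ℕ) (ε : ℝ) (hε : 0 < ε)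
    (v : Fin N → EuclideanSpace ℂ (Fin (2 ^ s))) (hv : Orthonormal ℂ v)
    (U : List Bool → Option (Finset (EuclideanSpace ℂ (Fin (2 ^ s))))) (hpf : PrefixFree U)
    (σ : Fin N → List Bool) (A : Fin N → Finset (EuclideanSpace ℂ (Fin (2 ^ s))))
    (hU : ∀ i, U (σ i) = some (A i))
    (hA : ∀ i, Orthonormal ℂ (fun t : (A i : Set (EuclideanSpace ℂ (Fin (2 ^ s)))) =>
      (t : EuclideanSpace ℂ (Fin (2 ^ s)))))
    (hproj : ∀ i, ε < ∑ t ∈ A i, ‖(inner ℂ t (v i) : ℂ)‖ ^ 2)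
    (B : ℝ) (hB : ∀ i, ((σ i).length : ℝ) + Real.logb 2 ((A i).card) ≤ B) :
    (N : ℝ) ≤ ε⁻¹ * (2 : ℝ) ^ B := by
  set code : List Bool → Finset (EuclideanSpace ℂ (Fin (2 ^ s))) := fun τ => (U τ).getD ∅
  have hA_eq : ∀ i, A i = code (σ i) := fun i => by simp [code, hU]
  have hσ : (Set.range σ).Pairwise fun x y => ¬x <+: y := by
    rintro _ ⟨i, rfl⟩ _ ⟨j, rfl⟩ hne h
    exact hne (hpf _ _ (by simp [hU]) (by simp [hU]) h)
  have key := card_mul_le_two_rpow_of_prefixFree hv hσ (fun i => hA_eq i ▸ hA i)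
    (fun i => hA_eq i ▸ hproj i) (fun i => hA_eq i ▸ hB i)
  rw [Fintype.card_fin] at key
  rwa [inv_mul_eq_div, le_div_iff₀ hε]
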